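/- Equality of computable real numbers is undecidable: there is no code c : Nat.Partrec.Code such that for all codes e₁, e₂ : Nat.Partrec.Code and all reals x, y, if e₁ names x and e₂ names y, then c.eval (Encodable.encode (e₁, e₂)) terminates and its value equals 1 if x = y and equals 0 if x ≠ y (Borel's observation, proved by Rice). -/

import Mathlib

/-!
If equality of named reals were decidable, comparing with `0` would solve the halting problem.
Send a code `e` to the real `2⁻¹ ^ k`, where `k` is the first stage at which `e` halts on input `0`,
or to `0` if it never halts. This real is named by a code computable from `e`: its `n`-th
approximation `2⁻¹ ^ min k (n + 1)` needs only a bounded search through the first `n + 1` stages.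
-/

/-- A code `e` names a real `x` if for every `n`, `e.eval n` terminates with
output `Encodable.encode q` for some rational `q` with `|x - q| ≤ 2⁻¹ ^ n`. -/
def Names (e : Nat.Partrec.Code) (x : ℝ) : Prop :=
  ∀ n : ℕ, ∃ q : ℚ, Encodable.encode q ∈ e.eval n ∧ |x - (q : ℝ)| ≤ (2:ℝ)⁻¹ ^ n

open Nat.Partrec (Code)
open Nat.Partrec.Code Encodable

open Classical in
noncomputable def firstHitReal (p : ℕ → Bool) : ℝ :=
  if h : ∃ k, p k then 2⁻¹ ^ Nat.find h else 0

namespace firstHitReal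

variable {p : ℕ → Bool}

theorem nonneg : 0 ≤ firstHitReal p := by
  unfold firstHitReal
  split_ifs <;> positivity

theorem eq_inv_two_pow {k : ℕ} (hk : p k) (hlt : ∀ j < k, p j = false) :
    firstHitReal p = 2⁻¹ ^ k := by
  have h : ∃ k, p k := ⟨k, hk⟩
  have hfind : Nat.find h = k :=
    (Nat.find_eq_iff h).2 ⟨hk, fun j hj => by simp [hlt j hj]⟩
  rw [firstHitReal, dif_pos h, hfind]

theorem le_inv_two_pow_of_forall_lt {m : ℕ} (hlt : ∀ j < m, p j = false) :
    firstHitReal p ≤ 2⁻¹ ^ m := by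
  unfold firstHitReal
  split_ifs with h
  · have hm : m ≤ Nat.find h := Nat.le_find_iff h m |>.2 fun j hj => by simp [hlt j hj]
    exact pow_le_pow_of_le_one (by norm_num) (by norm_num) hm
  · positivity

theorem eq_zero_iff : firstHitReal p = 0 ↔ ¬∃ k, p k := by
  unfold firstHitReal
  split_ifs with h
  · exact iff_of_false (by positivity) (not_not_intro h)
  · exact iff_of_true rfl h

theorem abs_sub_findIdx_le (n : ℕ) :
    |firstHitReal p - 2⁻¹ ^ (List.range (n + 1)).findIdx p| ≤ 2⁻¹ ^ n := by
  rcases (List.findIdx_le_length (p := p) (xs := List.range (n + 1))).lt_or_eq with hlt | heq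
  · have hk : p ((List.range (n + 1)).findIdx p) := by
      simpa using List.findIdx_getElem (w := hlt)
    have hmin : ∀ j < (List.range (n + 1)).findIdx p, p j = false := fun j hj => by
      simpa using List.not_of_lt_findIdx hj
    rw [eq_inv_two_pow hk hmin, sub_self, abs_zero]
    positivity
  · rw [List.length_range] at heq
    have hmin : ∀ j < n + 1, p j = false := fun j hj =>
      List.findIdx_eq_length.1 (by simpa using heq) j (List.mem_range.2 hj)
    calc |firstHitReal p - 2⁻¹ ^ (List.range (n + 1)).findIdx p| ≤ 2⁻¹ ^ (n + 1) :=
          abs_sub_le_of_nonneg_of_le nonneg (le_inv_two_pow_of_forall_lt hmin) (by positivity)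
            (by rw [heq])
      _ ≤ 2⁻¹ ^ n := pow_le_pow_of_le_one (by norm_num) (by norm_num) n.le_succ

end firstHitReal

theorem encode_inv_two_pow (k : ℕ) :
    encode ((2 : ℚ)⁻¹ ^ k) = Nat.pair (encode (1 : ℤ)) (2 ^ k) := by
  change Nat.pair (encode ((2 : ℚ)⁻¹ ^ k).num) ((2 : ℚ)⁻¹ ^ k).den = _
  rw [Rat.num_pow, Rat.den_pow]
  norm_num

theorem primrec_encode_inv_two_pow : Primrec fun k : ℕ => encode ((2 : ℚ)⁻¹ ^ k) := by
  have hpow : Primrec fun k : ℕ => 2 ^ k :=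
    ((Primrec.nat_iff.2 Nat.Primrec.pow).comp (Primrec₂.natPair.comp (Primrec.const 2) .id)).of_eq
      fun k => by simp [Nat.unpaired]
  exact (Primrec₂.natPair.comp (Primrec.const _) hpow).of_eq fun k => (encode_inv_two_pow k).symm

theorem exists_computable_code_eval {α : Type*} [Primcodable α] {f : α → ℕ → ℕ}
    (hf : Computable₂ f) :
    ∃ g : α → Code, Computable g ∧ ∀ a n, (g a).eval n = Part.some (f a n) := by
  have hF : Partrec fun m : ℕ => ((decode (α := α) m.unpair.1).map (f · m.unpair.2) : Part ℕ) :=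
    Computable.ofOption <| Computable.option_map
      (Computable.decode.comp (Computable.fst.comp .unpair))
      (hf.comp .snd (Computable.snd.comp (Computable.unpair.comp .fst))).to₂
  obtain ⟨c, hc⟩ := exists_code.1 (Partrec.nat_iff.1 hF)
  refine ⟨fun a => curry c (encode a), (primrec₂_curry.comp (.const c) .encode).to_comp, ?_⟩
  intro a n
  simp [eval_curry, hc]

theorem Names.const (q : ℚ) : Names (Code.const (encode q)) q :=
  fun n => ⟨q, by simp [eval_const], by simp⟩

theorem exists_computable_names_firstHitReal {α : Type*} [Primcodable α] {p : α → ℕ → Bool}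
    (hp : Primrec₂ p) : ∃ g : α → Code, Computable g ∧ ∀ a, Names (g a) (firstHitReal (p a)) := by
  have hf : Computable₂ fun a n => encode ((2 : ℚ)⁻¹ ^ (List.range (n + 1)).findIdx (p a)) :=
    (primrec_encode_inv_two_pow.comp <| Primrec.list_findIdx
      (Primrec.list_range.comp (Primrec.succ.comp .snd))
      (hp.comp (Primrec.fst.comp .fst) .snd).to₂).to_comp
  obtain ⟨g, hg, hgeval⟩ := exists_computable_code_eval hf
  refine ⟨g, hg, fun a n => ⟨(2 : ℚ)⁻¹ ^ (List.range (n + 1)).findIdx (p a), ?_, by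
    push_cast; exact firstHitReal.abs_sub_findIdx_le n⟩⟩
  rw [hgeval]
  exact Part.mem_some _

def DecidesRealEq (c : Code) : Prop :=
  ∀ (e₁ e₂ : Code) (x y : ℝ), Names e₁ x → Names e₂ y →
    ∃ v : ℕ, v ∈ c.eval (encode (e₁, e₂)) ∧ (x = y → v = 1) ∧ (x ≠ y → v = 0)

theorem DecidesRealEq.computablePred_eq {c : Code} (hc : DecidesRealEq c) {α : Type*}
    [Primcodable α] {g : α → Code} (hg : Computable g) {x : α → ℝ} (hx : ∀ a, Names (g a) (x a))
    {e₀ : Code} {y : ℝ} (hy : Names e₀ y) : ComputablePred fun a => x a = y := by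
  classical
  refine ComputablePred.computable_iff.2 ⟨fun a => decide (x a = y), ?_, by simp⟩
  have hrun : Partrec fun a => (c.eval (encode (g a, e₀))).map fun v => decide (v = 1) :=
    (eval_part.comp (.const c) (Computable.encode.comp (hg.pair (.const e₀)))).map
      (Primrec.eq.comp Primrec.snd (Primrec.const 1)).decide.to_comp.to₂
  refine hrun.of_eq_tot fun a => ?_
  obtain ⟨v, hv, heq, hne⟩ := hc (g a) e₀ (x a) y (hx a) hy
  refine Part.mem_map_iff _ |>.2 ⟨v, hv, ?_⟩
  by_cases hxy : x a = y <;> simp [hxy, heq, hne]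

theorem exists_evaln_isSome_iff_dom (c : Code) (n : ℕ) :
    (∃ k, (evaln k c n).isSome) ↔ (c.eval n).Dom := by
  simp only [Part.dom_iff_mem, evaln_complete, Option.isSome_iff_exists]
  exact ⟨fun ⟨k, a, h⟩ => ⟨a, k, h⟩, fun ⟨a, k, h⟩ => ⟨k, a, h⟩⟩

/-- Borel/Rice: equality of computable real numbers is undecidable. -/
theorem equality_undecidable :
    ¬ ∃ c : Nat.Partrec.Code, ∀ (e₁ e₂ : Nat.Partrec.Code) (x y : ℝ),
        Names e₁ x → Names e₂ y →
        ∃ v : ℕ, v ∈ c.eval (Encodable.encode (e₁, e₂)) ∧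
          (x = y → v = 1) ∧ (x ≠ y → v = 0) := by
  rintro ⟨c, hc : DecidesRealEq c⟩
  obtain ⟨g, hg, hnames⟩ :=
    exists_computable_names_firstHitReal (p := fun (e : Code) k => (evaln k e 0).isSome)
      (Primrec.option_isSome.comp (primrec_evaln.comp
        ((Primrec.snd.pair Primrec.fst).pair (Primrec.const 0)))).to₂
  have hzero := hc.computablePred_eq hg hnames (Names.const 0)
  refine ComputablePred.halting_problem 0 (hzero.not.of_eq fun e => ?_)
  rw [Rat.cast_zero, firstHitReal.eq_zero_iff, not_not, exists_evaln_isSome_iff_dom]
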